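/- arXiv:2402.10596 — 6 statements merged into one kernel-verified Lean document; each statement's English description precedes it below -/
import Mathlib

section
/- Let X ∈ ℝ^{N×M}, Y ∈ ℝ^{N_y×M}, λ ≥ 0. For S ⊆ {1,…,N} with P^{xx}_{S,S} := X_S X_Sᵀ + λ I positive definite, define Q^{yy}(S) = P^{yy} − (P^{xy}_S)ᵀ (P^{xx}_{S,S})^{-1} P^{xy}_S, where P^{xy} = X Yᵀ and P^{yy} = Y Yᵀ. If additionally P^{xx}_{S∪{i},S∪{i}} is positive definite for i ∉ S, then Q^{yy}(S) − Q^{yy}(S∪{i}) = (Q^{xy}_i(S))ᵀ (Q^{xx}_{i,i}(S))^{-1} Q^{xy}_i(S), where Q^{xx}(S) = P^{xx} − (P^{xx}_S)ᵀ (P^{xx}_{S,S})^{-1} P^{xx}_S and Q^{xy}(S) = P^{xy} − (P^{xx}_S)ᵀ (P^{xx}_{S,S})^{-1} P^{xy}_S, with Q^{xx}(∅)=P^{xx}, Q^{xy}(∅)=P^{xy}, Q^{yy}(∅)=P^{yy}. -/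
open Matrix

/-- `P^{xx} = X Xᵀ + λ I_N`. -/
noncomputable def Pxx {N M : ℕ} (X : Matrix (Fin N) (Fin M) ℝ) (lam : ℝ) :
    Matrix (Fin N) (Fin N) ℝ :=
  X * Xᵀ + lam • (1 : Matrix (Fin N) (Fin N) ℝ)

/-- `Q^{xx}(S) = P^{xx} − (P^{xx}_S)ᵀ (P^{xx}_{S,S})⁻¹ P^{xx}_S`, with `S` given by the
(injective) embedding `e`.  For `k = 0` this reduces to `Q^{xx}(∅) = P^{xx}`. -/
noncomputable def Qxx {N M k : ℕ} (X : Matrix (Fin N) (Fin M) ℝ) (lam : ℝ)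
    (e : Fin k → Fin N) : Matrix (Fin N) (Fin N) ℝ :=
  Pxx X lam - ((Pxx X lam).submatrix e id)ᵀ * ((Pxx X lam).submatrix e e)⁻¹
      * ((Pxx X lam).submatrix e id)

/-- `Q^{xy}(S) = P^{xy} − (P^{xx}_S)ᵀ (P^{xx}_{S,S})⁻¹ P^{xy}_S` with `P^{xy} = X Yᵀ`. -/
noncomputable def Qxy {N M Ny k : ℕ} (X : Matrix (Fin N) (Fin M) ℝ)
    (Y : Matrix (Fin Ny) (Fin M) ℝ) (lam : ℝ) (e : Fin k → Fin N) :
    Matrix (Fin N) (Fin Ny) ℝ :=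
  X * Yᵀ - ((Pxx X lam).submatrix e id)ᵀ * ((Pxx X lam).submatrix e e)⁻¹
      * ((X * Yᵀ).submatrix e id)

/-- `Q^{yy}(S) = P^{yy} − (P^{xy}_S)ᵀ (P^{xx}_{S,S})⁻¹ P^{xy}_S` with `P^{yy} = Y Yᵀ`. -/
noncomputable def Qyy {N M Ny k : ℕ} (X : Matrix (Fin N) (Fin M) ℝ)
    (Y : Matrix (Fin Ny) (Fin M) ℝ) (lam : ℝ) (e : Fin k → Fin N) :
    Matrix (Fin Ny) (Fin Ny) ℝ :=
  Y * Yᵀ - ((X * Yᵀ).submatrix e id)ᵀ * ((Pxx X lam).submatrix e e)⁻¹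
      * ((X * Yᵀ).submatrix e id)

set_option linter.unusedVariables false

lemma posDef_of_submatrix_equiv {m n : Type*} [Fintype m] [Fintype n]
    {M : Matrix n n ℝ} (σ : m ≃ n) (h : (M.submatrix σ σ).PosDef) : M.PosDef := by
  have := h.submatrix σ.symm.injective
  rw [Matrix.submatrix_submatrix, Equiv.self_comp_symm, Matrix.submatrix_id_id] at this
  exact this

lemma mul_fin_one {p : Type*} [Fintype p] (K : Matrix (Fin 1) (Fin 1) ℝ)
    (Mm : Matrix (Fin 1) p ℝ) : K * Mm = K 0 0 • Mm := by
  ext a b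
  obtain rfl : a = 0 := Subsingleton.elim a 0
  simp [Matrix.mul_apply]

/-- Rank-one downdate of the residual output covariance when adding an element `i` to `S`:
`Q^{yy}(S) − Q^{yy}(S∪{i}) = (Q^{xy}_i(S))ᵀ (Q^{xx}_{i,i}(S))⁻¹ Q^{xy}_i(S)`. -/
theorem stmt_5 (N M Ny k : ℕ) (X : Matrix (Fin N) (Fin M) ℝ)
    (Y : Matrix (Fin Ny) (Fin M) ℝ) (lam : ℝ) (hlam : 0 ≤ lam)
    (e : Fin k → Fin N) (he : Function.Injective e)
    (i : Fin N) (hi : ∀ j, e j ≠ i)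
    (hS : ((Pxx X lam).submatrix e e).PosDef)
    (hS' : ((Pxx X lam).submatrix (Fin.snoc e i) (Fin.snoc e i)).PosDef) :
    Qyy X Y lam e - Qyy X Y lam (Fin.snoc e i)
      = (Qxx X lam e i i)⁻¹ • Matrix.vecMulVec (Qxy X Y lam e i) (Qxy X Y lam e i) := by
  classical
  set P := Pxx X lam with hPdef
  have hPsym : Pᵀ = P := by
    simp [hPdef, Pxx, transpose_add, transpose_mul, transpose_smul]
  have hPentry : ∀ a b, P a b = P b a := fun a b => congrFun (congrFun hPsym b) a
  set A := P.submatrix e e with hAdef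
  set B := P.submatrix e (fun _ : Fin 1 => i) with hBdef
  set D := P.submatrix (fun _ : Fin 1 => i) (fun _ : Fin 1 => i) with hDdef
  set C := (X * Yᵀ).submatrix e id with hCdef
  set c := (X * Yᵀ).submatrix (fun _ : Fin 1 => i) id with hcdef
  set σ : Fin (k + 1) ≃ (Fin k ⊕ Fin 1) := (finSumFinEquiv (m := k) (n := 1)).symm with hσdef
  set h : (Fin k ⊕ Fin 1) → Fin N := Sum.elim e (fun _ : Fin 1 => i) with hhdef
  have hsnoc : Fin.snoc e i = h ∘ σ := by
    funext j
    refine Fin.lastCases ?_ (fun j' => ?_) j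
    · simp [hhdef, hσdef, finSumFinEquiv_symm_last]
    · have : σ (Fin.castSucc j') = Sum.inl j' :=
        finSumFinEquiv_symm_apply_castAdd j'
      simp [hhdef, Function.comp_apply, this]
  set A' : Matrix (Fin k ⊕ Fin 1) (Fin k ⊕ Fin 1) ℝ := fromBlocks A B Bᵀ D with hA'def
  have hblock : P.submatrix h h = A' := by
    ext a b
    cases a <;> cases b <;>
      simp [hA'def, hhdef, hAdef, hBdef, hDdef, fromBlocks] <;>
      exact hPentry _ _
  have hMrows : (X * Yᵀ).submatrix h id = fromRows C c := by
    ext a b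
    cases a <;> simp [hhdef, hCdef, hcdef, fromRows_apply_inl, fromRows_apply_inr]
  have hA'pd : A'.PosDef := by
    rw [← hblock]
    apply posDef_of_submatrix_equiv σ
    rw [Matrix.submatrix_submatrix, ← hsnoc]
    exact hS'
  haveI hAinvertible : Invertible A := A.invertibleOfIsUnitDet hS.det_pos.ne'.isUnit
  have hAr : A * A⁻¹ = 1 := mul_nonsing_inv A hS.det_pos.ne'.isUnit
  have hAl : A⁻¹ * A = 1 := nonsing_inv_mul A hS.det_pos.ne'.isUnit
  have hA'l : A'⁻¹ * A' = 1 := nonsing_inv_mul A' hA'pd.det_pos.ne'.isUnit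
  set q : Matrix (Fin 1) (Fin 1) ℝ := D - Bᵀ * A⁻¹ * B with hqdef
  have hqne : q 0 0 ≠ 0 := by
    have hdet : A'.det = A.det * q.det := by
      rw [hA'def, Matrix.det_fromBlocks₁₁, invOf_eq_nonsing_inv, hqdef]
    have hqd : q.det ≠ 0 := by
      intro h0
      rw [h0, mul_zero] at hdet
      exact hA'pd.det_pos.ne' hdet
    simpa [Matrix.det_fin_one] using hqd
  set r : ℝ := (q 0 0)⁻¹ with hrdef
  set v : Matrix (Fin 1) (Fin Ny) ℝ := c - Bᵀ * (A⁻¹ * C) with hvdef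
  set W₁ : Matrix (Fin k) (Fin Ny) ℝ := A⁻¹ * C - A⁻¹ * (B * (r • v)) with hW₁def
  set W₂ : Matrix (Fin 1) (Fin Ny) ℝ := r • v with hW₂def
  have hkey : (D - Bᵀ * A⁻¹ * B) * (r • v) = v := by
    rw [← hqdef, mul_fin_one, smul_smul, hrdef, mul_inv_cancel₀ hqne, one_smul]
  have htop : A * W₁ + B * W₂ = C := by
    rw [hW₁def, hW₂def, Matrix.mul_sub, ← Matrix.mul_assoc, ← Matrix.mul_assoc, hAr,
      Matrix.one_mul, Matrix.one_mul]
    abel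
  have hbot : Bᵀ * W₁ + D * W₂ = c := by
    have expand : Bᵀ * W₁ + D * W₂
        = Bᵀ * (A⁻¹ * C) + (D - Bᵀ * A⁻¹ * B) * (r • v) := by
      rw [hW₁def, hW₂def, Matrix.mul_sub, Matrix.sub_mul]
      simp only [Matrix.mul_assoc]
      abel
    rw [expand, hkey, hvdef]
    abel
  have hAW : A' * fromRows W₁ W₂ = fromRows C c := by
    rw [hA'def, Matrix.fromBlocks_mul_fromRows, htop, hbot]
  have hA'invW : A'⁻¹ * fromRows C c = fromRows W₁ W₂ := by
    rw [← hAW, ← Matrix.mul_assoc, hA'l, Matrix.one_mul]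
  -- the (S ∪ {i}) residual
  have hQyy' : Qyy X Y lam (Fin.snoc e i) = Y * Yᵀ - (Cᵀ * W₁ + cᵀ * W₂) := by
    rw [Qyy]
    congr 1
    have e1 : (X * Yᵀ).submatrix (Fin.snoc e i) id
        = ((X * Yᵀ).submatrix h id).submatrix σ id := by
      rw [hsnoc, Matrix.submatrix_submatrix]
      rfl
    have e2 : (Pxx X lam).submatrix (Fin.snoc e i) (Fin.snoc e i)
        = (P.submatrix h h).submatrix σ σ := by
      rw [← hPdef, hsnoc, Matrix.submatrix_submatrix]
    rw [e1, e2, hblock, hMrows, Matrix.inv_submatrix_equiv, Matrix.transpose_submatrix,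
      Matrix.submatrix_mul_equiv, Matrix.submatrix_mul_equiv, Matrix.submatrix_id_id,
      Matrix.mul_assoc, hA'invW, Matrix.transpose_fromRows, Matrix.fromCols_mul_fromRows]
  have hAsym : Aᵀ = A := by
    ext a b
    exact hPentry _ _
  have hvT : vᵀ = cᵀ - Cᵀ * (A⁻¹ * B) := by
    rw [hvdef, Matrix.transpose_sub, Matrix.transpose_mul, Matrix.transpose_mul,
      Matrix.transpose_nonsing_inv, hAsym, Matrix.mul_assoc, Matrix.transpose_transpose]
  have hLHS : Qyy X Y lam e - Qyy X Y lam (Fin.snoc e i) = r • (vᵀ * v) := by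
    rw [hQyy']
    have hQyyS : Qyy X Y lam e = Y * Yᵀ - Cᵀ * (A⁻¹ * C) := by
      rw [Qyy, ← hPdef, ← hAdef, ← hCdef, Matrix.mul_assoc]
    rw [hQyyS]
    have expand2 : Cᵀ * W₁ + cᵀ * W₂
        = Cᵀ * (A⁻¹ * C) + (cᵀ - Cᵀ * (A⁻¹ * B)) * (r • v) := by
      rw [hW₁def, hW₂def, Matrix.mul_sub, Matrix.sub_mul]
      simp only [Matrix.mul_assoc]
      abel
    rw [expand2, ← hvT]
    rw [Matrix.mul_smul]
    abel
  rw [hLHS]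
  have hq00 : Qxx X lam e i i = q 0 0 := by
    simp only [Qxx, ← hPdef, ← hAdef, hqdef, hDdef, hBdef, Matrix.sub_apply,
      Matrix.mul_apply, Matrix.transpose_apply, Matrix.submatrix_apply, id_eq]
  have hvrow : Qxy X Y lam e i = fun j => v 0 j := by
    funext j
    simp only [Qxy, ← hPdef, ← hAdef, ← hCdef, hvdef, hcdef, hBdef, Matrix.sub_apply,
      Matrix.mul_apply, Matrix.transpose_apply, Matrix.submatrix_apply, id_eq]
    congr 1
    simp only [Finset.sum_mul, Finset.mul_sum]
    rw [Finset.sum_comm]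
    apply Finset.sum_congr rfl
    intro a _
    apply Finset.sum_congr rfl
    intro b _
    ring
  have hvv : vᵀ * v = vecMulVec (Qxy X Y lam e i) (Qxy X Y lam e i) := by
    ext a b
    rw [hvrow]
    simp [Matrix.mul_apply, Matrix.vecMulVec_apply]
  rw [hvv, hq00, hrdef]
end

section
/- With the setup of the Q-matrices above (X ∈ ℝ^{N×M}, λ ≥ 0, S ⊆ {1,…,N} with both P^{xx}_{S,S} and P^{xx}_{S∪{i},S∪{i}} positive definite, i ∉ S), the following rank-one downdate holds: Q^{xx}(S) − Q^{xx}(S∪{i}) = (Q^{xx}_i(S))ᵀ (Q^{xx}_{i,i}(S))^{-1} Q^{xx}_i(S). -/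
open Matrix

lemma aux {N k : ℕ} (P : Matrix (Fin N) (Fin N) ℝ) (hP : Pᵀ = P)
    (e : Fin k → Fin N) (i : Fin N)
    (hA : (P.submatrix e e).PosDef)
    (hB : (P.submatrix (Fin.snoc e i) (Fin.snoc e i)).PosDef) :
    (P - (P.submatrix e id)ᵀ * (P.submatrix e e)⁻¹ * (P.submatrix e id))
      - (P - (P.submatrix (Fin.snoc e i) id)ᵀ
            * (P.submatrix (Fin.snoc e i) (Fin.snoc e i))⁻¹
            * (P.submatrix (Fin.snoc e i) id))
      = ((P - (P.submatrix e id)ᵀ * (P.submatrix e e)⁻¹ * (P.submatrix e id)) i i)⁻¹ •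
        vecMulVec ((P - (P.submatrix e id)ᵀ * (P.submatrix e e)⁻¹ * (P.submatrix e id)) i)
          ((P - (P.submatrix e id)ᵀ * (P.submatrix e e)⁻¹ * (P.submatrix e id)) i) := by
  have hPs : ∀ a b, P a b = P b a := fun a b => by nth_rewrite 1 [← hP]; exact transpose_apply ..
  set A := P.submatrix e e with hAdef
  set R := P.submatrix e id with hRdef
  set B := P.submatrix (Fin.snoc e i) (Fin.snoc e i) with hBdef
  set Rf := P.submatrix (Fin.snoc e i) id with hRfdef
  set Q : Matrix (Fin N) (Fin N) ℝ := P - Rᵀ * A⁻¹ * R with hQdef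
  haveI iA : Invertible A := hA.isUnit.invertible
  haveI iB : Invertible B := hB.isUnit.invertible
  set ψ : Fin k ⊕ Fin 1 ≃ Fin (k + 1) := finSumFinEquiv with hψdef
  have hg : ∀ x, (Fin.snoc e i : Fin (k+1) → Fin N) (ψ x) = Sum.elim e (fun _ => i) x := by
    rintro (j | j)
    · exact Fin.snoc_castSucc (α := fun _ => Fin N) i e j
    · simp [hψdef]
      rw [show Fin.natAdd k j = Fin.last k from by ext; simp [Fin.val_eq_zero j]]
      simp
  set u : Matrix (Fin k) (Fin 1) ℝ := of fun j _ => P (e j) i with hudef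
  set v : Matrix (Fin 1) (Fin k) ℝ := of fun _ j => P i (e j) with hvdef
  set c : Matrix (Fin 1) (Fin 1) ℝ := of fun _ _ => P i i with hcdef
  set r : Matrix (Fin 1) (Fin N) ℝ := of fun _ a => P i a with hrdef
  set rq : Matrix (Fin 1) (Fin N) ℝ := of fun _ a => Q i a with hrqdef
  set s : ℝ := Q i i with hsdef
  have hBblock : B.submatrix ψ ψ = fromBlocks A u v c := by
    ext (x | x) (y | y) <;>
      simp [hBdef, Matrix.submatrix_apply, hg, fromBlocks, hAdef, hudef, hvdef, hcdef]
  have hMblock : Rf.submatrix ψ id = fromRows R r := by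
    ext (x | x) a <;>
      simp [hRfdef, Matrix.submatrix_apply, hg, fromRows_apply_inl, fromRows_apply_inr, hRdef, hrdef]
  set F : Matrix (Fin k ⊕ Fin 1) (Fin k ⊕ Fin 1) ℝ := fromBlocks A u v c with hFdef
  haveI iF : Invertible F := hBblock ▸ submatrixEquivInvertible B ψ ψ
  -- the scalar Schur complement
  have hsum : ∀ a : Fin N, (v * A⁻¹ * R) 0 a = (Rᵀ * A⁻¹ * R) i a := by
    intro a
    simp only [mul_apply, transpose_apply, hvdef, hRdef, of_apply, submatrix_apply, id_eq]
    refine Finset.sum_congr rfl fun l _ => ?_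
    refine congrArg (· * P (e l) a) ?_
    exact Finset.sum_congr rfl fun j _ => by rw [hPs i (e j)]
  have hvu : c - v * ⅟A * u = s • (1 : Matrix (Fin 1) (Fin 1) ℝ) := by
    rw [invOf_eq_nonsing_inv]
    ext x y
    rw [Subsingleton.elim x 0, Subsingleton.elim y 0]
    have : (v * A⁻¹ * u) 0 0 = (v * A⁻¹ * R) 0 i := by
      simp only [mul_apply, hudef, hRdef, of_apply, submatrix_apply, id_eq]
    simp only [Matrix.sub_apply, Matrix.smul_apply, Matrix.one_apply_eq, smul_eq_mul, mul_one, hcdef,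
      of_apply, this, hsum i, hsdef, hQdef]
  have hs_pos : 0 < s := by
    have hdet : F.det = A.det * (c - v * ⅟A * u).det := det_fromBlocks₁₁ A u v c
    have hdetF : F.det = B.det := by rw [← hBblock, det_submatrix_equiv_self]
    have h1 : (c - v * ⅟A * u).det = s := by
      rw [hvu, det_fin_one]; simp
    nlinarith [hA.det_pos, hB.det_pos, hdet, hdetF, h1]
  have hs0 : s ≠ 0 := hs_pos.ne'
  haveI iS : Invertible (c - v * ⅟A * u) := by
    rw [hvu]
    exact (isUnit_iff_isUnit_det _ |>.2 (by simpa [det_fin_one] using hs0.isUnit)).invertible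
  have hinvS : ⅟(c - v * ⅟A * u) = s⁻¹ • (1 : Matrix (Fin 1) (Fin 1) ℝ) := by
    rw [invOf_eq_nonsing_inv]
    refine inv_eq_right_inv ?_
    rw [hvu, smul_mul_smul_comm, mul_one, mul_inv_cancel₀ hs0, one_smul]
  -- the two residual vectors
  have h1 : r - v * A⁻¹ * R = rq := by
    ext x a
    rw [Subsingleton.elim x 0]
    simp only [Matrix.sub_apply, hrdef, hrqdef, of_apply, hsum a, hQdef]
  have hAT : Aᵀ = A := by
    ext x y; simp only [transpose_apply, hAdef, submatrix_apply]; exact hPs (e y) (e x)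
  have hvT : vᵀ = u := by
    ext x y; simp only [transpose_apply, hvdef, hudef, of_apply]; exact hPs i (e x)
  have h2 : rᵀ - Rᵀ * A⁻¹ * u = rqᵀ := by
    have h := congrArg Matrix.transpose h1
    rwa [transpose_sub, transpose_mul, transpose_mul, transpose_nonsing_inv, hAT, hvT,
      ← Matrix.mul_assoc] at h
  have h3 : rqᵀ * rq = vecMulVec (Q i) (Q i) := by
    ext a b
    simp [hrqdef, mul_apply, vecMulVec_apply, Fin.sum_univ_one]
  -- the key product computation
  have hprod : (fromRows R r)ᵀ * F⁻¹ * fromRows R r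
      = Rᵀ * A⁻¹ * R + s⁻¹ • (rqᵀ * rq) := by
    have hFinv : F⁻¹ = fromBlocks
        (⅟A + ⅟A * u * ⅟(c - v * ⅟A * u) * v * ⅟A) (-(⅟A * u * ⅟(c - v * ⅟A * u)))
        (-(⅟(c - v * ⅟A * u) * v * ⅟A)) (⅟(c - v * ⅟A * u)) := by
      rw [← invOf_eq_nonsing_inv]
      exact invOf_fromBlocks₁₁_eq A u v c
    rw [hFinv, hinvS, invOf_eq_nonsing_inv,
      transpose_fromRows, fromCols_mul_fromBlocks, fromCols_mul_fromRows, ← h2, ← h1]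
    simp only [Matrix.mul_smul, Matrix.smul_mul, Matrix.mul_one, Matrix.one_mul,
      Matrix.mul_sub, Matrix.sub_mul, Matrix.mul_add, Matrix.add_mul,
      Matrix.mul_neg, Matrix.neg_mul, Matrix.mul_assoc, smul_sub, smul_add, neg_smul]
    abel
  -- translate back to the `Fin (k+1)` world
  have hTf : Rfᵀ * B⁻¹ * Rf = Rᵀ * A⁻¹ * R + s⁻¹ • (rqᵀ * rq) := by
    have hRf' : Rf = (fromRows R r).submatrix ψ.symm id := by
      rw [← hMblock, submatrix_submatrix]
      simp
    have hBinv : B⁻¹ = (F⁻¹).submatrix ψ.symm ψ.symm := by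
      have : B = F.submatrix ψ.symm ψ.symm := by
        rw [← hBblock, submatrix_submatrix]; simp
      rw [this, inv_submatrix_equiv]
    rw [hRf', hBinv, transpose_submatrix, submatrix_mul_equiv, submatrix_mul_equiv,
      submatrix_id_id, hprod]
  -- conclude
  show Q - (P - Rfᵀ * B⁻¹ * Rf) = s⁻¹ • vecMulVec (Q i) (Q i)
  rw [hTf, ← h3, hQdef]
  abel

/-- Rank-one downdate of the residual Gram matrix when adding an element `i` to `S`:
`Q^{xx}(S) − Q^{xx}(S∪{i}) = (Q^{xx}_i(S))ᵀ (Q^{xx}_{i,i}(S))⁻¹ Q^{xx}_i(S)`. -/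
theorem stmt_6 (N M k : ℕ) (X : Matrix (Fin N) (Fin M) ℝ) (lam : ℝ) (hlam : 0 ≤ lam)
    (e : Fin k → Fin N) (he : Function.Injective e)
    (i : Fin N) (hi : ∀ j, e j ≠ i)
    (hS : ((Pxx X lam).submatrix e e).PosDef)
    (hS' : ((Pxx X lam).submatrix (Fin.snoc e i) (Fin.snoc e i)).PosDef) :
    Qxx X lam e - Qxx X lam (Fin.snoc e i)
      = (Qxx X lam e i i)⁻¹ • Matrix.vecMulVec (Qxx X lam e i) (Qxx X lam e i) := by
  have hP : (Pxx X lam)ᵀ = Pxx X lam := by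
    simp [Pxx, transpose_add, transpose_mul, transpose_smul, transpose_one]
  simpa [Qxx] using aux (Pxx X lam) hP e i hS hS'
end

section
/- The objective J(S) = trace( Y X_Sᵀ (X_S X_Sᵀ + λ I)^{-1} X_S Yᵀ ) is monotone nondecreasing under adding a feasible element: if S and S∪{i} are both feasible (positive-definiteness of X_S X_Sᵀ + λ I and X_{S∪{i}} X_{S∪{i}}ᵀ + λ I), then J(S∪{i}) ≥ J(S). -/
open Matrix

lemma trace_nonneg_of_psd {n : ℕ} {B : Matrix (Fin n) (Fin n) ℝ} (hB : B.PosSemidef) :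
    0 ≤ Matrix.trace B := by
  rw [Matrix.trace]
  refine Finset.sum_nonneg fun p _ => ?_
  have h := hB.diag_nonneg (i := p)
  simpa [dotProduct, Matrix.mulVec, Pi.single_apply, Finset.mul_sum] using h

lemma trace_conj_nonneg {n m : ℕ} {B : Matrix (Fin n) (Fin n) ℝ} (hB : B.PosSemidef)
    (M : Matrix (Fin m) (Fin n) ℝ) : 0 ≤ Matrix.trace (M * B * Mᵀ) := by
  have := hB.mul_mul_conjTranspose_same M
  rw [Matrix.conjTranspose_eq_transpose_of_trivial] at this
  exact trace_nonneg_of_psd this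

lemma key_ineq {n M Ny : ℕ} (A : Matrix (Fin n) (Fin M) ℝ) (Y : Matrix (Fin Ny) (Fin M) ℝ)
    (B : Matrix (Fin n) (Fin n) ℝ) (hB : B.PosDef) (hBs : Bᵀ = B)
    (W : Matrix (Fin Ny) (Fin n) ℝ) :
    2 * Matrix.trace (W * A * Yᵀ) - Matrix.trace (W * B * Wᵀ)
      ≤ Matrix.trace (Y * Aᵀ * B⁻¹ * A * Yᵀ) := by
  have hu : IsUnit B.det := hB.det_pos.ne'.isUnit
  have hBB : B * B⁻¹ = 1 := Matrix.mul_nonsing_inv B hu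
  have hBinvT : B⁻¹ᵀ = B⁻¹ := by rw [Matrix.transpose_nonsing_inv, hBs]
  set C : Matrix (Fin Ny) (Fin n) ℝ := Y * Aᵀ * B⁻¹ with hC
  have h1 : W * B * Cᵀ = W * A * Yᵀ := by
    rw [hC]
    simp only [Matrix.transpose_mul, Matrix.transpose_transpose, hBinvT]
    calc W * B * (B⁻¹ * (A * Yᵀ)) = W * (B * B⁻¹) * (A * Yᵀ) := by
          simp only [Matrix.mul_assoc]
      _ = W * A * Yᵀ := by rw [hBB]; simp [Matrix.mul_assoc]
  have h2 : C * B * Cᵀ = Y * Aᵀ * B⁻¹ * A * Yᵀ := by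
    rw [hC]
    simp only [Matrix.transpose_mul, Matrix.transpose_transpose, hBinvT]
    calc Y * Aᵀ * B⁻¹ * B * (B⁻¹ * (A * Yᵀ))
        = Y * Aᵀ * (B⁻¹ * B * B⁻¹) * (A * Yᵀ) := by simp only [Matrix.mul_assoc]
      _ = Y * Aᵀ * B⁻¹ * A * Yᵀ := by
          rw [Matrix.nonsing_inv_mul B hu, Matrix.one_mul]
          simp [Matrix.mul_assoc]
  have h3 : Matrix.trace (C * B * Wᵀ) = Matrix.trace (W * A * Yᵀ) := by
    have : C * B * Wᵀ = (W * B * Cᵀ)ᵀ := by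
      simp [Matrix.transpose_mul, hBs, Matrix.mul_assoc]
    rw [this, Matrix.trace_transpose, h1]
  have hpsd := trace_conj_nonneg hB.posSemidef (W - C)
  have hexp : (W - C) * B * (W - C)ᵀ
      = W * B * Wᵀ - W * B * Cᵀ - C * B * Wᵀ + C * B * Cᵀ := by
    simp only [Matrix.transpose_sub, Matrix.sub_mul, Matrix.mul_sub]
    abel
  rw [hexp] at hpsd
  simp only [Matrix.trace_add, Matrix.trace_sub, h1, h3, h2] at hpsd
  linarith

/-- The objective `J(S) = trace(Y X_Sᵀ (X_S X_Sᵀ + λ I)⁻¹ X_S Yᵀ)`. -/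
noncomputable def Jobj {N M Ny k : ℕ} (X : Matrix (Fin N) (Fin M) ℝ)
    (Y : Matrix (Fin Ny) (Fin M) ℝ) (lam : ℝ) (e : Fin k → Fin N) : ℝ :=
  Matrix.trace (Y * (X.submatrix e id)ᵀ
      * (X.submatrix e id * (X.submatrix e id)ᵀ + lam • (1 : Matrix (Fin k) (Fin k) ℝ))⁻¹
      * X.submatrix e id * Yᵀ)

/-- Monotonicity of the objective: adding a feasible element cannot decrease `J`. -/
theorem stmt_8 (N M Ny k : ℕ) (X : Matrix (Fin N) (Fin M) ℝ)
    (Y : Matrix (Fin Ny) (Fin M) ℝ) (lam : ℝ) (hlam : 0 ≤ lam)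
    (e : Fin k → Fin N) (he : Function.Injective e)
    (i : Fin N) (hi : ∀ j, e j ≠ i)
    (hS : (X.submatrix e id * (X.submatrix e id)ᵀ
        + lam • (1 : Matrix (Fin k) (Fin k) ℝ)).PosDef)
    (hS' : (X.submatrix (Fin.snoc e i) id * (X.submatrix (Fin.snoc e i) id)ᵀ
        + lam • (1 : Matrix (Fin (k + 1)) (Fin (k + 1)) ℝ)).PosDef) :
    Jobj X Y lam e ≤ Jobj X Y lam (Fin.snoc e i) := by
  set A : Matrix (Fin k) (Fin M) ℝ := X.submatrix e id with hA
  set A' : Matrix (Fin (k + 1)) (Fin M) ℝ := X.submatrix (Fin.snoc e i) id with hA'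
  set B : Matrix (Fin k) (Fin k) ℝ := A * Aᵀ + lam • 1 with hB
  set B' : Matrix (Fin (k + 1)) (Fin (k + 1)) ℝ := A' * A'ᵀ + lam • 1 with hB'
  have hBs : Bᵀ = B := by
    rw [hB]
    simp [Matrix.transpose_add, Matrix.transpose_mul, Matrix.transpose_smul]
  have hB's : B'ᵀ = B' := by
    rw [hB']
    simp [Matrix.transpose_add, Matrix.transpose_mul, Matrix.transpose_smul]
  -- embedding matrix
  set E : Matrix (Fin k) (Fin (k + 1)) ℝ :=
    Matrix.of (fun j q => if q = Fin.castSucc j then (1 : ℝ) else 0) with hE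
  have hEmul : ∀ {p : ℕ} (Z : Matrix (Fin (k + 1)) (Fin p) ℝ),
      E * Z = Z.submatrix Fin.castSucc id := by
    intro p Z
    ext j m
    simp [hE, Matrix.mul_apply, ite_mul]
  have hmulE : ∀ {p : ℕ} (Z : Matrix (Fin p) (Fin (k + 1)) ℝ),
      Z * Eᵀ = Z.submatrix id Fin.castSucc := by
    intro p Z
    ext m j
    simp [hE, Matrix.mul_apply, mul_ite]
  have hEA : E * A' = A := by
    rw [hEmul]
    ext j m
    simp [hA, hA', Matrix.submatrix_apply]
  have hEE : E * Eᵀ = (1 : Matrix (Fin k) (Fin k) ℝ) := by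
    rw [hmulE]
    ext j l
    simp [hE, Matrix.submatrix_apply, Matrix.one_apply, Fin.castSucc_inj, eq_comm]
  have hEBE : E * B' * Eᵀ = B := by
    rw [hB', hB]
    have hAE : A' ᵀ * Eᵀ = Aᵀ := by
      rw [← Matrix.transpose_mul, hEA]
    calc E * (A' * A'ᵀ + lam • 1) * Eᵀ
        = E * A' * (A'ᵀ * Eᵀ) + lam • (E * Eᵀ) := by
          simp only [Matrix.mul_add, Matrix.add_mul, Matrix.mul_smul, Matrix.smul_mul,
            Matrix.mul_one, Matrix.mul_assoc]
      _ = A * Aᵀ + lam • 1 := by rw [hEA, hAE, hEE]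
  -- optimal weights for S
  set C : Matrix (Fin Ny) (Fin k) ℝ := Y * Aᵀ * B⁻¹ with hC
  have hu : IsUnit B.det := hS.det_pos.ne'.isUnit
  have hBinvT : B⁻¹ᵀ = B⁻¹ := by rw [Matrix.transpose_nonsing_inv, hBs]
  have hJ : Jobj X Y lam e = Matrix.trace (Y * Aᵀ * B⁻¹ * A * Yᵀ) := rfl
  have hCBC : C * B * Cᵀ = Y * Aᵀ * B⁻¹ * A * Yᵀ := by
    rw [hC]
    simp only [Matrix.transpose_mul, Matrix.transpose_transpose, hBinvT]
    calc Y * Aᵀ * B⁻¹ * B * (B⁻¹ * (A * Yᵀ))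
        = Y * Aᵀ * (B⁻¹ * B * B⁻¹) * (A * Yᵀ) := by simp only [Matrix.mul_assoc]
      _ = Y * Aᵀ * B⁻¹ * A * Yᵀ := by
          rw [Matrix.nonsing_inv_mul B hu, Matrix.one_mul]
          simp [Matrix.mul_assoc]
  have hCA : C * A * Yᵀ = Y * Aᵀ * B⁻¹ * A * Yᵀ := by
    rw [hC]
  have hkey := key_ineq A' Y B' hS' hB's (C * E)
  have hW'A : C * E * A' * Yᵀ = C * A * Yᵀ := by
    rw [Matrix.mul_assoc C E A', hEA]
  have hW'B : C * E * B' * (C * E)ᵀ = C * B * Cᵀ := by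
    calc C * E * B' * (C * E)ᵀ = C * (E * B' * Eᵀ) * Cᵀ := by
          simp only [Matrix.transpose_mul, Matrix.mul_assoc]
      _ = C * B * Cᵀ := by rw [hEBE]
  rw [hW'A, hW'B, hCA, hCBC] at hkey
  have : Jobj X Y lam (Fin.snoc e i) = Matrix.trace (Y * A'ᵀ * B'⁻¹ * A' * Yᵀ) := rfl
  rw [hJ, this]
  linarith
end

section
/- Let Ỹ ∈ ℝ^{Ñ×M} have SVD Ỹ = U Σ Vᵀ with singular values σ₁ ≥ σ₂ ≥ … ordered decreasingly, and for r ≤ rank(Ỹ) let Z = Σ_{1:r,1:r} V_{1:r} ∈ ℝ^{r×M} be the leading-r reduced output matrix. For any feasible S (with X_S X_Sᵀ + λ I positive definite, λ ≥ 0), the objectives J_Ỹ(S) = trace(Ỹ X_Sᵀ (X_S X_Sᵀ + λI)^{-1} X_S Ỹᵀ) and J_Z(S) (defined analogously with Z in place of Ỹ) satisfy 0 ≤ J_Ỹ(S) − J_Z(S) ≤ Σ_{i=r+1}^{rank Ỹ} σ_i². -/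
open Matrix

lemma psd_diag_nonneg {n : ℕ} {A : Matrix (Fin n) (Fin n) ℝ} (hA : A.PosSemidef) (i : Fin n) :
    0 ≤ A i i := by
  exact hA.diag_nonneg

lemma sum_if_coe {m : ℕ} (i : ℕ) (g : Fin m → ℝ) :
    (∑ p : Fin m, if i = (p : ℕ) then g p else 0) = if h : i < m then g ⟨i, h⟩ else 0 := by
  split_ifs with h
  · rw [Finset.sum_eq_single (⟨i, h⟩ : Fin m)]
    · simp
    · intro b _ hb
      exact if_neg fun hc => hb (by ext; exact hc.symm)
    · simp
  · refine Finset.sum_eq_zero fun p _ => if_neg fun hc => h ?_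
    rw [hc]; exact p.isLt

/-- SVD truncation bound: with `Ỹ = U Σ V` (SVD, `U`, `V` orthogonal, singular values
`σ₀ ≥ σ₁ ≥ … ≥ 0` vanishing beyond the rank `rk`) and `Z = Σ_{1:r,1:r} V_{1:r}` the
leading-`r` reduced output matrix (`r ≤ rk`), for any feasible `S`,
`0 ≤ J_Ỹ(S) − J_Z(S) ≤ Σ_{i=r}^{rk−1} σ_i²` (0-based indexing). -/
theorem stmt_11 (Nt N M k r rk : ℕ)
    (hrrk : r ≤ rk) (hrkN : rk ≤ Nt) (hrkM : rk ≤ M) (hrM : r ≤ M)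
    (X : Matrix (Fin N) (Fin M) ℝ) (lam : ℝ) (hlam : 0 ≤ lam)
    (Ytil : Matrix (Fin Nt) (Fin M) ℝ)
    (U : Matrix (Fin Nt) (Fin Nt) ℝ) (V : Matrix (Fin M) (Fin M) ℝ)
    (hU : Uᵀ * U = 1) (hU' : U * Uᵀ = 1)
    (hV : Vᵀ * V = 1) (hV' : V * Vᵀ = 1)
    (σ : ℕ → ℝ)
    (hord : ∀ i j : ℕ, i ≤ j → σ j ≤ σ i) (hnn : ∀ i, 0 ≤ σ i)
    (hvanish : ∀ i, rk ≤ i → σ i = 0)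
    (hSVD : Ytil = U * (Matrix.of fun (i : Fin Nt) (j : Fin M) =>
        if (i : ℕ) = (j : ℕ) then σ i else 0) * V)
    (hrank : Ytil.rank = rk)
    (Z : Matrix (Fin r) (Fin M) ℝ)
    (hZ : Z = Matrix.of fun (i : Fin r) (j : Fin M) => σ i * V (Fin.castLE hrM i) j)
    (e : Fin k → Fin N) (he : Function.Injective e)
    (hS : (X.submatrix e id * (X.submatrix e id)ᵀ
        + lam • (1 : Matrix (Fin k) (Fin k) ℝ)).PosDef) :
    0 ≤ Jobj X Ytil lam e - Jobj X Z lam e ∧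
      Jobj X Ytil lam e - Jobj X Z lam e ≤ ∑ i ∈ Finset.Ico r rk, σ i ^ 2 := by
  classical
  set W := X.submatrix e id with hWdef
  set P := W * Wᵀ + lam • (1 : Matrix (Fin k) (Fin k) ℝ) with hPdef
  haveI : Invertible P := hS.isUnit.invertible
  set A := Wᵀ * P⁻¹ * W with hAdef
  have hApsd : A.PosSemidef := by
    have := (hS.inv).posSemidef.conjTranspose_mul_mul_same W
    rwa [conjTranspose_eq_transpose_of_trivial] at this
  have hblock : (fromBlocks P W Wᵀ (1 : Matrix (Fin M) (Fin M) ℝ)).PosSemidef := by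
    have hfac : fromBlocks P W Wᵀ (1 : Matrix (Fin M) (Fin M) ℝ) =
        (fromBlocks W (Real.sqrt lam • (1 : Matrix (Fin k) (Fin k) ℝ))
          (1 : Matrix (Fin M) (Fin M) ℝ) (0 : Matrix (Fin M) (Fin k) ℝ)) *
        (fromBlocks W (Real.sqrt lam • (1 : Matrix (Fin k) (Fin k) ℝ))
          (1 : Matrix (Fin M) (Fin M) ℝ) (0 : Matrix (Fin M) (Fin k) ℝ))ᴴ := by
      rw [fromBlocks_conjTranspose, fromBlocks_multiply]
      simp [conjTranspose_eq_transpose_of_trivial, smul_smul,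
        Real.mul_self_sqrt hlam, hPdef, smul_mul_assoc, mul_smul_comm]
    rw [hfac]
    exact posSemidef_self_mul_conjTranspose _
  have hIA : ((1 : Matrix (Fin M) (Fin M) ℝ) - A).PosSemidef := by
    have h2 := (Matrix.PosDef.fromBlocks₁₁ W (1 : Matrix (Fin M) (Fin M) ℝ) hS).mp
      (by rwa [conjTranspose_eq_transpose_of_trivial])
    rwa [conjTranspose_eq_transpose_of_trivial, ← hAdef] at h2
  set B := V * A * Vᵀ with hBdef
  have hBpsd : B.PosSemidef := by
    have := hApsd.mul_mul_conjTranspose_same V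
    rwa [conjTranspose_eq_transpose_of_trivial] at this
  have h1B : ((1 : Matrix (Fin M) (Fin M) ℝ) - B).PosSemidef := by
    have h := hIA.mul_mul_conjTranspose_same V
    rw [conjTranspose_eq_transpose_of_trivial] at h
    have e1 : V * ((1 : Matrix (Fin M) (Fin M) ℝ) - A) * Vᵀ = 1 - B := by
      rw [mul_sub, sub_mul, mul_one, hV', hBdef]
    rwa [e1] at h
  have hdiag0 : ∀ p : Fin M, 0 ≤ B p p := fun p => psd_diag_nonneg hBpsd p
  have hdiag1 : ∀ p : Fin M, B p p ≤ 1 := by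
    intro p
    have h := psd_diag_nonneg h1B p
    simp only [Matrix.sub_apply, Matrix.one_apply_eq] at h
    linarith
  set b : ℕ → ℝ := fun i => if h : i < M then B ⟨i, h⟩ ⟨i, h⟩ else 0 with hbdef
  have hb0 : ∀ i, 0 ≤ b i := by
    intro i; simp only [hbdef]; split_ifs with h
    · exact hdiag0 _
    · exact le_refl 0
  have hb1 : ∀ i, b i ≤ 1 := by
    intro i; simp only [hbdef]; split_ifs with h
    · exact hdiag1 _
    · norm_num
  set S := (Matrix.of fun (i : Fin Nt) (j : Fin M) =>
      if (i : ℕ) = (j : ℕ) then σ i else 0) with hSdef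
  have hJY : Jobj X Ytil lam e = ∑ i ∈ Finset.range rk, σ i ^ 2 * b i := by
    have h1 : Ytil * Wᵀ * P⁻¹ * W * Ytilᵀ = U * (S * B * Sᵀ) * Uᵀ := by
      rw [hSVD]
      simp only [transpose_mul, hBdef, hAdef]
      simp only [Matrix.mul_assoc]
    have h2 : Jobj X Ytil lam e = Matrix.trace (S * B * Sᵀ) := by
      simp only [Jobj]
      rw [← hWdef, ← hPdef, h1, Matrix.trace_mul_cycle, hU, one_mul]
    have h3 : ∀ i : Fin Nt, (S * B * Sᵀ) i i = σ (i : ℕ) ^ 2 * b (i : ℕ) := by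
      intro i
      have hrow : ∀ q : Fin M, (S * B) i q =
          if h : (i : ℕ) < M then σ (i : ℕ) * B ⟨(i : ℕ), h⟩ q else 0 := by
        intro q
        rw [mul_apply, ← sum_if_coe (i : ℕ) (fun p => σ (i : ℕ) * B p q)]
        refine Finset.sum_congr rfl fun p _ => ?_
        simp only [hSdef, Matrix.of_apply]
        rw [ite_mul, zero_mul]
      rw [mul_apply]
      calc (∑ q, (S * B) i q * Sᵀ q i)
          = ∑ q : Fin M, if (i : ℕ) = (q : ℕ) then (S * B) i q * σ (i : ℕ) else 0 := by
            refine Finset.sum_congr rfl fun q _ => ?_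
            simp only [transpose_apply, hSdef, Matrix.of_apply]
            rw [mul_ite, mul_zero]
        _ = if h : (i : ℕ) < M then (S * B) i ⟨(i : ℕ), h⟩ * σ (i : ℕ) else 0 :=
            sum_if_coe _ _
        _ = σ (i : ℕ) ^ 2 * b (i : ℕ) := by
            simp only [hbdef]
            split_ifs with h
            · rw [hrow ⟨(i : ℕ), h⟩, dif_pos h]; ring
            · ring
    have h4 : Matrix.trace (S * B * Sᵀ) = ∑ i : Fin Nt, σ (i : ℕ) ^ 2 * b (i : ℕ) := by
      rw [Matrix.trace]
      exact Finset.sum_congr rfl fun i _ => h3 i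
    rw [h2, h4, Fin.sum_univ_eq_sum_range (fun n => σ n ^ 2 * b n)]
    refine (Finset.sum_subset (Finset.range_subset_range.mpr hrkN) ?_).symm
    intro x _ hxn
    have hx : rk ≤ x := le_of_not_gt fun hc => hxn (Finset.mem_range.mpr hc)
    rw [hvanish x hx]; ring
  have hJZ : Jobj X Z lam e = ∑ i ∈ Finset.range r, σ i ^ 2 * b i := by
    have h2 : Jobj X Z lam e = Matrix.trace (Z * A * Zᵀ) := by
      simp only [Jobj]
      rw [← hWdef, ← hPdef, hAdef, Matrix.mul_assoc Z Wᵀ, Matrix.mul_assoc Z (Wᵀ * P⁻¹)]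
    have h3 : ∀ i : Fin r, (Z * A * Zᵀ) i i = σ (i : ℕ) ^ 2 * b (i : ℕ) := by
      intro i
      have hBi : B (Fin.castLE hrM i) (Fin.castLE hrM i) = b (i : ℕ) := by
        simp only [hbdef]
        rw [dif_pos (lt_of_lt_of_le i.isLt hrM)]
        rfl
      have h5 : (Z * A * Zᵀ) i i
          = σ (i : ℕ) ^ 2 * B (Fin.castLE hrM i) (Fin.castLE hrM i) := by
        simp only [hZ, hBdef, mul_apply, transpose_apply, Matrix.of_apply,
          Finset.sum_mul, Finset.mul_sum]
        exact Finset.sum_congr rfl fun x _ => Finset.sum_congr rfl fun p _ => by ring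
      rw [h5, hBi]
    have h4 : Matrix.trace (Z * A * Zᵀ) = ∑ i : Fin r, σ (i : ℕ) ^ 2 * b (i : ℕ) := by
      rw [Matrix.trace]
      exact Finset.sum_congr rfl fun i _ => h3 i
    rw [h2, h4, Fin.sum_univ_eq_sum_range (fun n => σ n ^ 2 * b n)]
  rw [hJY, hJZ, ← Finset.sum_Ico_eq_sub _ hrrk]
  constructor
  · exact Finset.sum_nonneg fun i _ => mul_nonneg (sq_nonneg _) (hb0 i)
  · refine Finset.sum_le_sum fun i _ => ?_
    calc σ i ^ 2 * b i ≤ σ i ^ 2 * 1 := by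
          exact mul_le_mul_of_nonneg_left (hb1 i) (sq_nonneg _)
      _ = σ i ^ 2 := mul_one _
end

section
/- Decomposition of the objective under SVD splitting: with Ỹ = U_{·,1:r} Z + U_{·,r+1:Ñ} Z^tr (U orthogonal, the two column blocks having orthonormal columns and mutually orthogonal), J_Ỹ(S) = J_Z(S) + trace( Z^tr X_Sᵀ (X_S X_Sᵀ + λ I)^{-1} X_S (Z^tr)ᵀ ) for any feasible S. -/
/-!
Writing `B = X_Sᵀ (X_S X_Sᵀ + λ I)⁻¹ X_S`, both sides are quadratic forms `trace (Y B Yᵀ)`.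
By cyclicity, `trace ((U Z) B (V W)ᵀ) = trace ((Vᵀ U) Z B Wᵀ)`, so expanding
`Ỹ = U₁ Z + U₂ Z^tr` the orthogonality relations `U₁ᵀ U₁ = 1`, `U₂ᵀ U₂ = 1`, `U₁ᵀ U₂ = 0`
kill the cross terms and strip the `U`'s from the diagonal ones.
-/

open Matrix

namespace Matrix

variable {ι m n p R : Type*} [Fintype ι] [Fintype m] [Fintype n] [Fintype p] [CommRing R]

theorem trace_mul_mul_transpose_mul (U : Matrix ι m R) (V : Matrix ι n R) (A : Matrix m p R)
    (B : Matrix p p R) (C : Matrix n p R) :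
    trace (U * A * B * (V * C)ᵀ) = trace (Vᵀ * U * A * B * Cᵀ) := by
  rw [transpose_mul, ← Matrix.mul_assoc, trace_mul_comm]
  simp only [Matrix.mul_assoc]

theorem trace_add_mul_mul_transpose_of_orthogonal {r t : Type*} [Fintype r] [Fintype t]
    [DecidableEq r] [DecidableEq t]
    (U₁ : Matrix ι r R) (U₂ : Matrix ι t R)
    (hU₁ : U₁ᵀ * U₁ = 1) (hU₂ : U₂ᵀ * U₂ = 1) (hU₁₂ : U₁ᵀ * U₂ = 0)
    (Z : Matrix r p R) (W : Matrix t p R) (B : Matrix p p R) :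
    trace ((U₁ * Z + U₂ * W) * B * (U₁ * Z + U₂ * W)ᵀ)
      = trace (Z * B * Zᵀ) + trace (W * B * Wᵀ) := by
  have hU₂₁ : U₂ᵀ * U₁ = 0 := by simpa using congrArg transpose hU₁₂
  simp only [transpose_add, Matrix.add_mul, Matrix.mul_add, trace_add,
    trace_mul_mul_transpose_mul, hU₁, hU₂, hU₁₂, hU₂₁]
  simp

end Matrix

theorem stmt_13_general (Nt N M k r t : ℕ)
    (X : Matrix (Fin N) (Fin M) ℝ) (lam : ℝ)
    (Ytil : Matrix (Fin Nt) (Fin M) ℝ)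
    (U1 : Matrix (Fin Nt) (Fin r) ℝ) (U2 : Matrix (Fin Nt) (Fin t) ℝ)
    (hU1 : U1ᵀ * U1 = 1) (hU2 : U2ᵀ * U2 = 1) (hU12 : U1ᵀ * U2 = 0)
    (Z : Matrix (Fin r) (Fin M) ℝ) (Ztr : Matrix (Fin t) (Fin M) ℝ)
    (hY : Ytil = U1 * Z + U2 * Ztr)
    (e : Fin k → Fin N) :
    Jobj X Ytil lam e = Jobj X Z lam e
      + Matrix.trace (Ztr * (X.submatrix e id)ᵀ
          * (X.submatrix e id * (X.submatrix e id)ᵀ + lam • (1 : Matrix (Fin k) (Fin k) ℝ))⁻¹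
          * X.submatrix e id * Ztrᵀ) := by
  subst hY
  have hsplit := trace_add_mul_mul_transpose_of_orthogonal U1 U2 hU1 hU2 hU12 Z Ztr
    ((X.submatrix e id)ᵀ
      * (X.submatrix e id * (X.submatrix e id)ᵀ + lam • (1 : Matrix (Fin k) (Fin k) ℝ))⁻¹
      * X.submatrix e id)
  simpa only [Jobj, Matrix.mul_assoc] using hsplit

/-- Decomposition of the objective under SVD splitting: if `Ỹ = U₁ Z + U₂ Z^tr` with
`U₁`, `U₂` having orthonormal and mutually orthogonal columns, then
`J_Ỹ(S) = J_Z(S) + trace(Z^tr X_Sᵀ (X_S X_Sᵀ + λ I)⁻¹ X_S (Z^tr)ᵀ)` for any feasible `S`. -/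
theorem stmt_13 (Nt N M k r t : ℕ)
    (X : Matrix (Fin N) (Fin M) ℝ) (lam : ℝ) (hlam : 0 ≤ lam)
    (Ytil : Matrix (Fin Nt) (Fin M) ℝ)
    (U1 : Matrix (Fin Nt) (Fin r) ℝ) (U2 : Matrix (Fin Nt) (Fin t) ℝ)
    (hU1 : U1ᵀ * U1 = 1) (hU2 : U2ᵀ * U2 = 1) (hU12 : U1ᵀ * U2 = 0)
    (Z : Matrix (Fin r) (Fin M) ℝ) (Ztr : Matrix (Fin t) (Fin M) ℝ)
    (hY : Ytil = U1 * Z + U2 * Ztr)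
    (e : Fin k → Fin N) (he : Function.Injective e)
    (hS : (X.submatrix e id * (X.submatrix e id)ᵀ
        + lam • (1 : Matrix (Fin k) (Fin k) ℝ)).PosDef) :
    Jobj X Ytil lam e = Jobj X Z lam e
      + Matrix.trace (Ztr * (X.submatrix e id)ᵀ
          * (X.submatrix e id * (X.submatrix e id)ᵀ + lam • (1 : Matrix (Fin k) (Fin k) ℝ))⁻¹
          * X.submatrix e id * Ztrᵀ) :=
  stmt_13_general Nt N M k r t X lam Ytil U1 U2 hU1 hU2 hU12 Z Ztr hY e
end

section
/- Rank-one recursion for the cross term: with ξ^{(k)} as above and θ^{(k)} = (Q^{xy}_{s̄_k}(S̄_{k−1}))ᵀ (Q^{xx}_{s̄_k,s̄_k}(S̄_{k−1}))^{−1/2}, it holds that Q^{xy}(S̄_k) = X Yᵀ − Σ_{l=1}^{k} ξ^{(l)} (θ^{(l)})ᵀ for every k = 1,…,p. -/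
open Matrix

lemma aux_posDef_submatrix_equiv {n m : Type*} [Fintype n] [Fintype m] [DecidableEq n]
    [DecidableEq m] {M : Matrix n n ℝ} (hM : M.PosDef) (e : m ≃ n) :
    (M.submatrix e e).PosDef := by
  refine posDef_iff_dotProduct_mulVec.mpr ⟨hM.1.submatrix e, fun x hx => ?_⟩
  have hx' : x ∘ e.symm ≠ 0 := fun h => hx (by ext i; simpa using congrFun h (e i))
  have h := (posDef_iff_dotProduct_mulVec.mp hM).2 hx'
  convert h using 1
  rw [submatrix_mulVec_equiv]
  simp only [dotProduct, Function.comp_apply]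
  exact Fintype.sum_equiv e _ _ (fun i => by simp)



lemma aux_corr_reindex {N Ny k : ℕ} {ι : Type*} [Fintype ι] [DecidableEq ι]
    (P : Matrix (Fin N) (Fin N) ℝ) (W : Matrix (Fin N) (Fin Ny) ℝ)
    (E : Fin k → Fin N) (σ : ι ≃ Fin k) :
    (P.submatrix E id)ᵀ * (P.submatrix E E)⁻¹ * (W.submatrix E id)
      = (P.submatrix (E ∘ σ) id)ᵀ * (P.submatrix (E ∘ σ) (E ∘ σ))⁻¹
        * (W.submatrix (E ∘ σ) id) := by
  have h1 : (P.submatrix (E ∘ σ) id)ᵀ = (P.submatrix E id)ᵀ.submatrix id σ := rfl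
  have h2 : P.submatrix (E ∘ σ) (E ∘ σ) = (P.submatrix E E).submatrix σ σ := rfl
  have h3 : W.submatrix (E ∘ σ) id = (W.submatrix E id).submatrix σ id := rfl
  rw [h1, h2, h3, inv_submatrix_equiv, submatrix_mul_equiv, submatrix_mul_equiv,
    submatrix_id_id]

lemma aux_inv_one_by_one (A : Matrix (Fin 1) (Fin 1) ℝ) (h : A 0 0 ≠ 0) :
    A⁻¹ 0 0 = (A 0 0)⁻¹ := by
  have : A⁻¹ = Matrix.of fun _ _ : Fin 1 => (A 0 0)⁻¹ := by
    apply Matrix.inv_eq_right_inv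
    ext i j
    fin_cases i; fin_cases j
    simp [Matrix.mul_apply, Fin.sum_univ_one, mul_inv_cancel₀ h, Matrix.one_apply]
  rw [this]; rfl

lemma aux_corr_step {N Ny m : ℕ} (P : Matrix (Fin N) (Fin N) ℝ) (hP : ∀ i j, P i j = P j i)
    (W : Matrix (Fin N) (Fin Ny) ℝ) (e' : Fin m → Fin N) (t : Fin N)
    (hA : (P.submatrix e' e').PosDef)
    (hM : (P.submatrix (Sum.elim e' (fun _ : Fin 1 => t))
        (Sum.elim e' (fun _ : Fin 1 => t))).PosDef) :
    (0 < (P - (P.submatrix e' id)ᵀ * (P.submatrix e' e')⁻¹ * (P.submatrix e' id)) t t) ∧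
    ∀ a b,
      (W - (P.submatrix (Sum.elim e' fun _ : Fin 1 => t) id)ᵀ
          * (P.submatrix (Sum.elim e' fun _ : Fin 1 => t) (Sum.elim e' fun _ : Fin 1 => t))⁻¹
          * (W.submatrix (Sum.elim e' fun _ : Fin 1 => t) id)) a b
        = (W - (P.submatrix e' id)ᵀ * (P.submatrix e' e')⁻¹ * (W.submatrix e' id)) a b
          - (P - (P.submatrix e' id)ᵀ * (P.submatrix e' e')⁻¹ * (P.submatrix e' id)) a t
            * (W - (P.submatrix e' id)ᵀ * (P.submatrix e' e')⁻¹ * (W.submatrix e' id)) t b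
            / (P - (P.submatrix e' id)ᵀ * (P.submatrix e' e')⁻¹ * (P.submatrix e' id)) t t := by
  set t1 : Fin 1 → Fin N := fun _ => t with ht1
  set A := P.submatrix e' e' with hAdef
  set B := P.submatrix e' (id : Fin N → Fin N) with hBdef
  set b := P.submatrix e' t1 with hbdef
  set c := P.submatrix t1 e' with hcdef
  set d := P.submatrix t1 t1 with hddef
  set r := P.submatrix t1 (id : Fin N → Fin N) with hrdef
  set Ws := W.submatrix e' (id : Fin Ny → Fin Ny) with hWsdef
  set wt := W.submatrix t1 (id : Fin Ny → Fin Ny) with hwtdef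
  haveI : Invertible A := invertibleOfIsUnitDet A (isUnit_iff_ne_zero.mpr hA.det_pos.ne')
  have hsub : P.submatrix (Sum.elim e' t1) (Sum.elim e' t1) = fromBlocks A b c d := by
    ext (i | i) (j | j) <;> rfl
  have hM' : (fromBlocks A b c d).PosDef := hsub ▸ hM
  haveI : Invertible (fromBlocks A b c d) :=
    invertibleOfIsUnitDet _ (isUnit_iff_ne_zero.mpr hM'.det_pos.ne')
  haveI iS : Invertible (d - c * ⅟A * b) := invertibleOfFromBlocks₁₁Invertible A b c d
  set S := d - c * ⅟A * b with hSdef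
  have hc : c = bᵀ := by
    ext i j; simp only [hcdef, hbdef, transpose_apply, submatrix_apply]; exact hP t (e' j)
  -- the scalar Schur complement
  have hdelta : S 0 0 = (P - Bᵀ * A⁻¹ * B) t t := by
    simp only [hSdef, invOf_eq_nonsing_inv, Matrix.sub_apply, Matrix.mul_apply,
      hcdef, hbdef, hddef, hBdef, submatrix_apply, transpose_apply, id_eq]
    congr 1
    apply Finset.sum_congr rfl
    intro j _
    congr 1
    apply Finset.sum_congr rfl
    intro i _
    rw [hP t (e' i)]
  -- δ ≥ 0
  have hSpsd : S.PosSemidef := by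
    have h1 : (fromBlocks A b bᴴ d).PosSemidef := by
      have : bᴴ = c := by rw [hc]; ext i j; simp [conjTranspose_apply]
      rw [this]; exact hM'.posSemidef
    have h2 := (PosDef.fromBlocks₁₁ b d hA).mp h1
    have : bᴴ = c := by rw [hc]; ext i j; simp [conjTranspose_apply]
    rw [hSdef, invOf_eq_nonsing_inv, ← this]
    exact h2
  have hS00nonneg : 0 ≤ S 0 0 := by
    have := (posSemidef_iff_dotProduct_mulVec.mp hSpsd).2 (fun _ => 1)
    simpa [dotProduct, mulVec, Fin.sum_univ_one] using this
  have hS00ne : S 0 0 ≠ 0 := by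
    intro h
    have hdet : S.det = 0 := by rw [Matrix.det_fin_one, h]
    have : IsUnit S.det := (isUnit_of_invertible S).map detMonoidHom
    rw [hdet] at this
    exact this.ne_zero rfl
  have hdeltapos : 0 < (P - Bᵀ * A⁻¹ * B) t t := hdelta ▸ lt_of_le_of_ne hS00nonneg (Ne.symm hS00ne)
  refine ⟨hdeltapos, fun a b0 => ?_⟩
  -- block structure of the long rows
  have hrow : P.submatrix (Sum.elim e' t1) id = fromRows B r := by
    ext (i | i) j <;> rfl
  have hWrow : W.submatrix (Sum.elim e' t1) id = fromRows Ws wt := by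
    ext (i | i) j <;> rfl
  -- inverse of the block matrix
  have hinv : (fromBlocks A b c d)⁻¹ =
      fromBlocks (⅟A + ⅟A * b * ⅟S * c * ⅟A) (-(⅟A * b * ⅟S)) (-(⅟S * c * ⅟A)) ⅟S := by
    rw [← invOf_eq_nonsing_inv, invOf_fromBlocks₁₁_eq]
  have hmain : (P.submatrix (Sum.elim e' t1) id)ᵀ
      * (P.submatrix (Sum.elim e' t1) (Sum.elim e' t1))⁻¹
      * (W.submatrix (Sum.elim e' t1) id)
      = Bᵀ * ⅟A * Ws + (rᵀ - Bᵀ * ⅟A * b) * ⅟S * (wt - c * ⅟A * Ws) := by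
    rw [hsub, hrow, hWrow, hinv, transpose_fromRows, fromCols_mul_fromBlocks,
      fromCols_mul_fromRows]
    simp only [Matrix.mul_add, Matrix.add_mul, Matrix.mul_neg, Matrix.neg_mul,
      Matrix.sub_mul, Matrix.mul_sub, Matrix.mul_assoc, sub_eq_add_neg]
    abel
  rw [hmain]
  -- entrywise
  have hSinv : (⅟S : Matrix (Fin 1) (Fin 1) ℝ) 0 0 = ((P - Bᵀ * A⁻¹ * B) t t)⁻¹ := by
    rw [invOf_eq_nonsing_inv, aux_inv_one_by_one S hS00ne, hdelta]
  have hU : (rᵀ - Bᵀ * ⅟A * b) a 0 = (P - Bᵀ * A⁻¹ * B) a t := by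
    have e2 : (Bᵀ * ⅟A * b) a 0 = (Bᵀ * A⁻¹ * B) a t := by
      rw [Matrix.mul_apply, Matrix.mul_apply]
      exact Finset.sum_congr rfl fun j _ => by rw [invOf_eq_nonsing_inv]; rfl
    rw [Matrix.sub_apply, Matrix.sub_apply, e2]
    congr 1
    exact hP t a
  have hV : (wt - c * ⅟A * Ws) 0 b0 = (W - Bᵀ * A⁻¹ * Ws) t b0 := by
    have e1 : ∀ j : Fin m, (c * ⅟A) 0 j = (Bᵀ * A⁻¹) t j := fun j => by
      simp only [invOf_eq_nonsing_inv, Matrix.mul_apply, hcdef, hBdef, submatrix_apply,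
        transpose_apply, id_eq]
      exact Finset.sum_congr rfl fun i _ => by rw [hP t (e' i)]
    have e3 : (c * ⅟A * Ws) 0 b0 = (Bᵀ * A⁻¹ * Ws) t b0 := by
      rw [Matrix.mul_apply, Matrix.mul_apply]
      exact Finset.sum_congr rfl fun j _ => by rw [e1 j]
    rw [Matrix.sub_apply, Matrix.sub_apply, e3]; rfl
  have hexpand : ((rᵀ - Bᵀ * ⅟A * b) * ⅟S * (wt - c * ⅟A * Ws)) a b0
      = (rᵀ - Bᵀ * ⅟A * b) a 0 * (⅟S : Matrix (Fin 1) (Fin 1) ℝ) 0 0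
        * (wt - c * ⅟A * Ws) 0 b0 := by
    simp [Matrix.mul_apply, Fin.sum_univ_one]
  have hBA : (Bᵀ * ⅟A * Ws) a b0 = (Bᵀ * A⁻¹ * Ws) a b0 := by rw [invOf_eq_nonsing_inv]
  simp only [Matrix.sub_apply, Matrix.add_apply]
  rw [hexpand, hU, hV, hSinv, hBA]
  simp only [Matrix.sub_apply]
  ring

lemma aux_Pxx_symm {N M : ℕ} (X : Matrix (Fin N) (Fin M) ℝ) (lam : ℝ) :
    ∀ i j, Pxx X lam i j = Pxx X lam j i := by
  have h : (Pxx X lam)ᵀ = Pxx X lam := by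
    unfold Pxx
    rw [transpose_add, transpose_mul, transpose_transpose, transpose_smul, transpose_one]
  intro i j
  conv_lhs => rw [← h]
  rfl

lemma aux_Qxx_symm {N M k : ℕ} (X : Matrix (Fin N) (Fin M) ℝ) (lam : ℝ)
    (e : Fin k → Fin N) (a t : Fin N) :
    Qxx X lam e a t = Qxx X lam e t a := by
  have hP : (Pxx X lam)ᵀ = Pxx X lam := by
    unfold Pxx
    rw [transpose_add, transpose_mul, transpose_transpose, transpose_smul, transpose_one]
  have h : (Qxx X lam e)ᵀ = Qxx X lam e := by
    unfold Qxx
    have h2 : ((Pxx X lam).submatrix e e)ᵀ = (Pxx X lam).submatrix e e := by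
      rw [transpose_submatrix, hP]
    rw [transpose_sub, transpose_mul, transpose_mul, transpose_transpose,
      transpose_nonsing_inv, h2, Matrix.mul_assoc, hP]
  conv_lhs => rw [← h]
  rfl

/-- Rank-one recursion for the cross term along a greedy sequence: with
`ξ^{(l)} = (Q^{xx}_{s̄_l}(S̄_{l−1}))ᵀ (Q^{xx}_{s̄_l,s̄_l}(S̄_{l−1}))^{−1/2}` and
`θ^{(l)} = (Q^{xy}_{s̄_l}(S̄_{l−1}))ᵀ (Q^{xx}_{s̄_l,s̄_l}(S̄_{l−1}))^{−1/2}`, one has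
`Q^{xy}(S̄_k) = X Yᵀ − Σ_{l=1}^{k} ξ^{(l)} (θ^{(l)})ᵀ` for `k = 1, …, p`. -/
theorem stmt_16 (N M Ny p : ℕ) (X : Matrix (Fin N) (Fin M) ℝ)
    (Y : Matrix (Fin Ny) (Fin M) ℝ) (lam : ℝ) (hlam : 0 ≤ lam)
    (s : ℕ → Fin N) (hinj : Set.InjOn s (Set.Iio p))
    (hfeas : ∀ k, k ≤ p →
      ((Pxx X lam).submatrix (fun j : Fin k => s (j : ℕ)) (fun j : Fin k => s (j : ℕ))).PosDef)
    (xi : ℕ → Fin N → ℝ) (theta : ℕ → Fin Ny → ℝ)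
    (hxi : ∀ l, 1 ≤ l → l ≤ p → ∀ a,
      xi l a = Qxx X lam (fun j : Fin (l - 1) => s (j : ℕ)) (s (l - 1)) a
        / Real.sqrt (Qxx X lam (fun j : Fin (l - 1) => s (j : ℕ)) (s (l - 1)) (s (l - 1))))
    (htheta : ∀ l, 1 ≤ l → l ≤ p → ∀ a,
      theta l a = Qxy X Y lam (fun j : Fin (l - 1) => s (j : ℕ)) (s (l - 1)) a
        / Real.sqrt (Qxx X lam (fun j : Fin (l - 1) => s (j : ℕ)) (s (l - 1)) (s (l - 1)))) :
    ∀ k, 1 ≤ k → k ≤ p →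
      Qxy X Y lam (fun j : Fin k => s (j : ℕ))
        = X * Yᵀ - ∑ l ∈ Finset.range k, Matrix.vecMulVec (xi (l + 1)) (theta (l + 1)) := by
  have hPsym := aux_Pxx_symm X lam
  have key : ∀ k, k ≤ p →
      Qxy X Y lam (fun j : Fin k => s (j : ℕ))
        = X * Yᵀ - ∑ l ∈ Finset.range k, Matrix.vecMulVec (xi (l + 1)) (theta (l + 1)) := by
    intro k
    induction k with
    | zero =>
      intro _
      have hz : (((Pxx X lam).submatrix (fun j : Fin 0 => s (j : ℕ)) id)ᵀ
          * ((Pxx X lam).submatrix (fun j : Fin 0 => s (j : ℕ)) (fun j : Fin 0 => s (j : ℕ)))⁻¹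
          * ((X * Yᵀ).submatrix (fun j : Fin 0 => s (j : ℕ)) id)) = 0 := by
        ext a b
        simp [Matrix.mul_apply]
      unfold Qxy
      rw [hz]
      simp
    | succ m IH =>
      intro hk
      have hmp : m ≤ p := Nat.le_of_succ_le hk
      have hIH := IH hmp
      have hEσ : (fun j : Fin (m + 1) => s (j : ℕ)) ∘ (finSumFinEquiv : Fin m ⊕ Fin 1 ≃ Fin (m + 1))
          = Sum.elim (fun j : Fin m => s (j : ℕ)) (fun _ : Fin 1 => s m) := by
        funext x
        rcases x with i | i
        · simp
        · simp
      have hMf : ((Pxx X lam).submatrix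
          (Sum.elim (fun j : Fin m => s (j : ℕ)) (fun _ : Fin 1 => s m))
          (Sum.elim (fun j : Fin m => s (j : ℕ)) (fun _ : Fin 1 => s m))).PosDef := by
        have h1 := aux_posDef_submatrix_equiv (hfeas (m + 1) hk) finSumFinEquiv
        rw [show ((Pxx X lam).submatrix (fun j : Fin (m + 1) => s (j : ℕ))
            (fun j : Fin (m + 1) => s (j : ℕ))).submatrix finSumFinEquiv finSumFinEquiv
            = (Pxx X lam).submatrix ((fun j : Fin (m + 1) => s (j : ℕ)) ∘ finSumFinEquiv)
              ((fun j : Fin (m + 1) => s (j : ℕ)) ∘ finSumFinEquiv) from rfl, hEσ] at h1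
        exact h1
      obtain ⟨hδpos, hstep⟩ := aux_corr_step (Pxx X lam) hPsym (X * Yᵀ)
        (fun j : Fin m => s (j : ℕ)) (s m) (hfeas m hmp) hMf
      have hδpos' : 0 < Qxx X lam (fun j : Fin m => s (j : ℕ)) (s m) (s m) := hδpos
      have htrans := aux_corr_reindex (Pxx X lam) (X * Yᵀ)
        (fun j : Fin (m + 1) => s (j : ℕ)) finSumFinEquiv
      rw [hEσ] at htrans
      rw [Finset.sum_range_succ, sub_add_eq_sub_sub, ← hIH]
      ext a b
      rw [Matrix.sub_apply, Matrix.vecMulVec_apply]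
      have hxi' : xi (m + 1) a = Qxx X lam (fun j : Fin m => s (j : ℕ)) (s m) a
          / Real.sqrt (Qxx X lam (fun j : Fin m => s (j : ℕ)) (s m) (s m)) :=
        hxi (m + 1) (Nat.le_add_left 1 m) hk a
      have htheta' : theta (m + 1) b = Qxy X Y lam (fun j : Fin m => s (j : ℕ)) (s m) b
          / Real.sqrt (Qxx X lam (fun j : Fin m => s (j : ℕ)) (s m) (s m)) :=
        htheta (m + 1) (Nat.le_add_left 1 m) hk b
      rw [hxi', htheta']
      rw [div_mul_div_comm, Real.mul_self_sqrt (le_of_lt hδpos'),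
        aux_Qxx_symm X lam (fun j : Fin m => s (j : ℕ)) (s m) a]
      show (X * Yᵀ - ((Pxx X lam).submatrix (fun j : Fin (m + 1) => s (j : ℕ)) id)ᵀ
          * ((Pxx X lam).submatrix (fun j : Fin (m + 1) => s (j : ℕ))
              (fun j : Fin (m + 1) => s (j : ℕ)))⁻¹
          * ((X * Yᵀ).submatrix (fun j : Fin (m + 1) => s (j : ℕ)) id)) a b = _
      rw [htrans, hstep a b]
      unfold Qxy Qxx
      ring
  intro k _ hk2
  exact key k hk2
end
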